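/- arXiv:2102.06104 — 2 statements merged into one kernel-verified Lean document; each statement's English description precedes it below -/
import Mathlib

section
/- For every abelian map ψ on a group G, every n ≥ 0 and all g, h ∈ G, one has g ∘_{n+1} h = ((g·ψ(g⁻¹)) ∘_n h)·ψ(g). -/
/-!
Conjugation by `c = ψ g` commutes with `δ`, because `c` commutes with the abelian range of `ψ`.
Since `δ(g)⁻¹ = c · δ(g⁻¹) · c⁻¹`, the `n`-fold iterate of `δ` at `δ(g)⁻¹` is the `c`-conjugate of
`δⁿ⁺¹(g⁻¹)`; this identifies the left factor `g · ψₙ₊₁(g⁻¹)` of `g ∘ₙ₊₁ h` with that of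
`δ(g) ∘ₙ h`, while the right factors satisfy `ψₙ₊₁(g) = ψₙ(δ g) · ψ(g)`.
-/

/-- `aDelta ψ g = g · ψ(g⁻¹)`, the map `δ = 1 - ψ`. -/
def aDelta {G : Type*} [Group G] (ψ : G → G) (g : G) : G := g * ψ g⁻¹

/-- `aPsi ψ n g = (δⁿ(g))⁻¹ · g`, the map `ψ_n = -(1-ψ)ⁿ + 1` (so `ψ_0 = 0`, `ψ_1 = ψ`). -/
def aPsi {G : Type*} [Group G] (ψ : G → G) (n : ℕ) (g : G) : G :=
  ((aDelta ψ)^[n] g)⁻¹ * g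

/-- `g ∘_n h = g · ψ_n(g⁻¹) · h · ψ_n(g)`. -/
def aCirc {G : Type*} [Group G] (ψ : G → G) (n : ℕ) (g h : G) : G :=
  g * aPsi ψ n g⁻¹ * h * aPsi ψ n g

section AbelianMap

variable {G : Type*} [Group G]

theorem aDelta_apply (ψ : G →* G) (x : G) : aDelta ψ x = x * (ψ x)⁻¹ := by
  rw [aDelta, map_inv]

theorem aDelta_commute_conj (ψ : G →* G) (hab : ∀ a b, Commute (ψ a) (ψ b)) {c : G}
    (hc : ∀ y, Commute c (ψ y)) :
    Function.Commute (aDelta ψ) (fun y => c * y * c⁻¹) := by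
  intro y
  have hψ_conj : ψ (c * y * c⁻¹) = ψ y := by
    rw [map_mul, map_mul, (hab c y).eq, map_inv, mul_inv_cancel_right]
  rw [aDelta_apply, aDelta_apply, hψ_conj]
  simp only [mul_assoc, (hc y).inv_inv.eq]

theorem iterate_aDelta_conj (ψ : G →* G) (hab : ∀ a b, Commute (ψ a) (ψ b)) {c : G}
    (hc : ∀ y, Commute c (ψ y)) (n : ℕ) (y : G) :
    (aDelta ψ)^[n] (c * y * c⁻¹) = c * (aDelta ψ)^[n] y * c⁻¹ :=
  ((aDelta_commute_conj ψ hab hc).iterate_left n) y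

theorem aPsi_succ (ψ : G →* G) (n : ℕ) (g : G) :
    aPsi ψ (n + 1) g = aPsi ψ n (aDelta ψ g) * ψ g := by
  simp only [aPsi, aDelta, Function.iterate_succ_apply, map_inv]
  group

theorem mul_aPsi_succ_inv (ψ : G →* G) (hab : ∀ a b, Commute (ψ a) (ψ b)) (n : ℕ) (g : G) :
    g * aPsi ψ (n + 1) g⁻¹ = aDelta ψ g * aPsi ψ n (aDelta ψ g)⁻¹ := by
  have hδ_inv : (aDelta ψ g)⁻¹ = ψ g * aDelta ψ g⁻¹ * (ψ g)⁻¹ := by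
    simp only [aDelta, inv_inv, map_inv]
    group
  simp only [aPsi, Function.iterate_succ_apply, hδ_inv, iterate_aDelta_conj ψ hab (hab g)]
  simp only [aDelta, map_inv]
  group

theorem aCirc_succ (ψ : G →* G) (hab : ∀ a b, Commute (ψ a) (ψ b)) (n : ℕ) (g h : G) :
    aCirc ψ (n + 1) g h = aCirc ψ n (aDelta ψ g) h * ψ g := by
  rw [aCirc, aCirc, mul_aPsi_succ_inv ψ hab, aPsi_succ]
  simp only [mul_assoc]

end AbelianMap

/-- For an abelian map ψ: `g ∘_{n+1} h = ((g·ψ(g⁻¹)) ∘_n h)·ψ(g)`. -/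
theorem stmt7 {G : Type*} [Group G] (ψ : G → G)
    (hψ : ∀ a b : G, ψ (a * b) = ψ a * ψ b)
    (hab : ∀ a b : G, ψ a * ψ b = ψ b * ψ a)
    (n : ℕ) (g h : G) :
    aCirc ψ (n + 1) g h = aCirc ψ n (g * ψ g⁻¹) h * ψ g :=
  aCirc_succ (MonoidHom.mk' ψ hψ) hab n g h
end

section
/- Let ψ be an abelian map on a group G and n ≥ 0. Then the image δⁿ(G) = { δⁿ(g) : g ∈ G } is a subgroup of G, and the operation ∘_n is commutative if and only if δⁿ(g)·δⁿ(h) = δⁿ(h)·δⁿ(g) for all g, h ∈ G. -/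
/-!
For an abelian map `p`, one has `g ∘ h = δ(g) δ(h) p(h) p(g)` and `δ(g ∘ h) = δ(g) δ(h)`, where
`g ∘ h = g p(g⁻¹) h p(g)` and `δ(g) = g p(g)⁻¹`. Hence `δ(G)` is closed under products, and inverses
since `g ∘ (p(g) g⁻¹ p(g)⁻¹) = 1`; and as the `p`-values commute, `∘` is commutative exactly when
the `δ`-values commute. The case of general `n` is the case `p = ψ_n`: by the recursion
`ψ_{n+1}(a) = ψ(a ψ_n(a)⁻¹) ψ_n(a)` each `ψ_n` takes values in `ψ(G)`, so it is again an abelian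
map, and its `δ` is `δⁿ`.
-/

section

variable {G : Type*} [Group G]

theorem aDelta_eq_mul_inv (f : G →* G) (a : G) : aDelta f a = a * (f a)⁻¹ := by
  rw [aDelta, map_inv]

section AbelianMap

variable (p : G →* G)

def circ (g h : G) : G := g * p g⁻¹ * h * p g

theorem circ_eq_aDelta_mul_aDelta_mul (g h : G) :
    circ p g h = aDelta p g * aDelta p h * (p h * p g) := by
  simp only [circ, aDelta_eq_mul_inv, map_inv]
  group

variable (hp : ∀ a b, Commute (p a) (p b))
include hp

theorem aDelta_circ (g h : G) : aDelta p (circ p g h) = aDelta p g * aDelta p h := by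
  have hmap : p (circ p g h) = p g * p h := by
    simp only [circ, map_mul, map_inv]
    rw [mul_assoc _ (p h), ← (hp (p g) h).eq]
    group
  rw [aDelta_eq_mul_inv, hmap, circ_eq_aDelta_mul_aDelta_mul, mul_inv_rev, ← (hp g h).eq]
  group

def aDeltaRange : Subgroup G where
  carrier := Set.range (aDelta p)
  one_mem' := ⟨1, by simp [aDelta]⟩
  mul_mem' := by
    rintro _ _ ⟨g, rfl⟩ ⟨h, rfl⟩
    exact ⟨circ p g h, aDelta_circ p hp g h⟩
  inv_mem' := by
    rintro _ ⟨g, rfl⟩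
    refine ⟨p g * g⁻¹ * (p g)⁻¹, eq_inv_of_mul_eq_one_right ?_⟩
    rw [← aDelta_circ p hp, show circ p g (p g * g⁻¹ * (p g)⁻¹) = 1 by simp [circ]; group]
    simp [aDelta]

theorem circ_comm_iff :
    (∀ g h, circ p g h = circ p h g) ↔ ∀ g h, aDelta p g * aDelta p h = aDelta p h * aDelta p g := by
  refine forall₂_congr fun g h => ?_
  rw [circ_eq_aDelta_mul_aDelta_mul, circ_eq_aDelta_mul_aDelta_mul, (hp h g).eq, mul_left_inj]

end AbelianMap

theorem iterate_aDelta_eq_mul_inv_aPsi (f : G → G) (n : ℕ) (a : G) :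
    (aDelta f)^[n] a = a * (aPsi f n a)⁻¹ := by
  simp [aPsi]

section Iterates

variable (f : G →* G)

theorem aPsi_succ_s13 (n : ℕ) (a : G) : aPsi f (n + 1) a = f (a * (aPsi f n a)⁻¹) * aPsi f n a := by
  rw [← iterate_aDelta_eq_mul_inv_aPsi, aPsi, aPsi, Function.iterate_succ_apply',
    aDelta_eq_mul_inv]
  group

theorem aPsi_mem_range (n : ℕ) (a : G) : aPsi f n a ∈ f.range := by
  induction n with
  | zero => simp [aPsi]
  | succ n ih => rw [aPsi_succ_s13]; exact mul_mem ⟨_, rfl⟩ ih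

variable (hf : ∀ a b, Commute (f a) (f b))
include hf

theorem commute_of_mem_range {x y : G} (hx : x ∈ f.range) (hy : y ∈ f.range) : Commute x y := by
  obtain ⟨a, rfl⟩ := hx
  obtain ⟨b, rfl⟩ := hy
  exact hf a b

theorem aPsi_mul (n : ℕ) (a b : G) : aPsi f n (a * b) = aPsi f n a * aPsi f n b := by
  induction n with
  | zero => simp [aPsi]
  | succ n ih =>
    rw [aPsi_succ_s13, aPsi_succ_s13, aPsi_succ_s13, ih]
    set x := aPsi f n a
    set y := aPsi f n b
    have hmap : f (a * b * (x * y)⁻¹) = f (a * x⁻¹) * f (b * y⁻¹) := by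
      rw [show a * b * (x * y)⁻¹ = a * (b * y⁻¹) * x⁻¹ by group, map_mul, map_mul f a,
        mul_assoc, (hf _ _).eq, ← mul_assoc, ← map_mul]
    have hx : Commute (f (b * y⁻¹)) x := commute_of_mem_range f hf ⟨_, rfl⟩ (aPsi_mem_range f n a)
    rw [hmap, mul_assoc _ x, ← mul_assoc x, ← hx.eq]
    group

def psiHom (n : ℕ) : G →* G := MonoidHom.mk' (aPsi f n) (aPsi_mul f hf n)

theorem commute_psiHom (n : ℕ) (a b : G) : Commute (psiHom f hf n a) (psiHom f hf n b) :=
  commute_of_mem_range f hf (aPsi_mem_range f n a) (aPsi_mem_range f n b)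

theorem aDelta_psiHom (n : ℕ) : aDelta (psiHom f hf n) = (aDelta f)^[n] := by
  funext a
  rw [aDelta_eq_mul_inv, iterate_aDelta_eq_mul_inv_aPsi]
  rfl

end Iterates

end

/-- For an abelian map ψ and `n ≥ 0`: `δⁿ(G)` is a subgroup of `G`, and `∘_n` is
commutative if and only if the elements `δⁿ(g)` pairwise commute. -/
theorem stmt13 {G : Type*} [Group G] (ψ : G → G)
    (hψ : ∀ a b : G, ψ (a * b) = ψ a * ψ b)
    (hab : ∀ a b : G, ψ a * ψ b = ψ b * ψ a)
    (n : ℕ) :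
    (∃ H : Subgroup G, (H : Set G) = Set.range ((aDelta ψ)^[n])) ∧
    ((∀ g h : G, aCirc ψ n g h = aCirc ψ n h g) ↔
      (∀ g h : G, (aDelta ψ)^[n] g * (aDelta ψ)^[n] h =
        (aDelta ψ)^[n] h * (aDelta ψ)^[n] g)) := by
  let f : G →* G := MonoidHom.mk' ψ hψ
  have hp := commute_psiHom f hab n
  have hδ : aDelta (psiHom f hab n) = (aDelta ψ)^[n] := aDelta_psiHom f hab n
  rw [← hδ]
  -- `aCirc ψ n` unfolds to `circ (psiHom f hab n)`.
  exact ⟨⟨aDeltaRange _ hp, rfl⟩, circ_comm_iff _ hp⟩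
end
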